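/- Let q be a power of 2 and let f = Σ_{i=0}^d A_i X^i ∈ F_q[X] with A_d ≠ 0, d ≥ 6, and d ≡ 2 (mod 4). Define F ∈ F_q[X,Y] by F(X,Y) = Σ_{i=3}^d A_i Y^{d-i} Σ_{k=1}^{i-1} (binom(i-1,k)+1) X^{k-1}. Then F(0,0) = 0 and the tangent cone of F at the origin equals A_d·X + A_{d-1}·Y; in particular, the homogeneous component of F of degree 0 vanishes and the homogeneous component of degree 1 is A_d·X + A_{d-1}·Y ≠ 0. -/

import Mathlib

open MvPolynomial

noncomputable section

/-- The smallest total degree of a monomial occurring in `P`. -/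
def minMonomialDeg {K : Type*} [Field K] (P : MvPolynomial (Fin 2) K) : ℕ :=
  sInf {m : ℕ | ∃ s ∈ P.support, (s.sum fun _ e => e) = m}

/-- The tangent cone of `P` at the origin: the nonzero homogeneous component of
lowest total degree (for `P ≠ 0`). -/
def tangentCone {K : Type*} [Field K] (P : MvPolynomial (Fin 2) K) : MvPolynomial (Fin 2) K :=
  homogeneousComponent (minMonomialDeg P) P

/-!
Each summand of `F` is a monomial `A_i (binom(i-1,k)+1) Y^(d-i) X^(k-1)`, homogeneous of degree
`(d - i) + (k - 1)`. Degree `0` only arises from `(i, k) = (d, 1)`, with coefficient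
`binom(d-1,1)+1 = d`, which vanishes in characteristic `2`. Degree `1` arises from `(d - 1, 1)`,
with coefficient `d - 1 ≡ 1`, and from `(d, 2)`, with coefficient `binom(d-1,2)+1`, odd because
`d ≡ 2 (mod 4)`. As `A_d ≠ 0`, the degree `1` component is the lowest nonzero one.
-/

theorem two_eq_zero_of_card_eq_two_pow {K : Type*} [Field K] [Fintype K] {n : ℕ}
    (hcard : Fintype.card K = 2 ^ n) : (2 : K) = 0 :=
  eq_zero_of_pow_eq_zero (n := n) <| by
    exact_mod_cast hcard ▸ FiniteField.cast_card_eq_zero K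

theorem Nat.odd_choose_two_pred_add_one {d : ℕ} (hd : d % 4 = 2) :
    Odd ((d - 1).choose 2 + 1) := by
  obtain ⟨t, rfl⟩ : ∃ t, d = 4 * t + 2 := ⟨d / 4, by omega⟩
  have hdouble : (4 * t + 2 - 1).choose 2 * 2 = (4 * t + 1) * (4 * t) := by
    rw [Nat.choose_two_right, Nat.div_mul_cancel (Nat.even_mul_pred_self _).two_dvd]
    rfl
  exact ⟨(4 * t + 1) * t, by linarith⟩

namespace MvPolynomial

variable {σ R : Type*} [CommSemiring R]

theorem homogeneousComponent_sum_of_isHomogeneous {ι : Type*} (s : Finset ι)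
    (φ : ι → MvPolynomial σ R) (deg : ι → ℕ) (hφ : ∀ i ∈ s, (φ i).IsHomogeneous (deg i))
    (m : ℕ) :
    homogeneousComponent m (∑ i ∈ s, φ i) = ∑ i ∈ s with deg i = m, φ i := by
  rw [map_sum, Finset.sum_filter]
  refine Finset.sum_congr rfl fun i hi => ?_
  rw [homogeneousComponent_of_mem (hφ i hi)]
  simp only [eq_comm]

theorem homogeneousComponent_ne_zero_iff {m : ℕ} {P : MvPolynomial σ R} :
    homogeneousComponent m P ≠ 0 ↔ ∃ s ∈ P.support, s.degree = m := by
  rw [← support_nonempty, support_homogeneousComponent]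
  simp only [Finset.Nonempty, Finset.mem_filter]

theorem eval_zero_eq_zero_of_homogeneousComponent_zero {P : MvPolynomial σ R}
    (h : homogeneousComponent 0 P = 0) : eval 0 P = 0 := by
  rwa [homogeneousComponent_zero, C_eq_zero, ← constantCoeff_eq, ← eval_zero] at h

end MvPolynomial

section TangentCone

variable {K : Type*} [Field K]

theorem minMonomialDeg_eq_sInf (P : MvPolynomial (Fin 2) K) :
    minMonomialDeg P = sInf {m | homogeneousComponent m P ≠ 0} := by
  simp only [minMonomialDeg, homogeneousComponent_ne_zero_iff]
  rfl

theorem minMonomialDeg_eq_of_homogeneousComponent {P : MvPolynomial (Fin 2) K} {m : ℕ}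
    (hlt : ∀ j < m, homogeneousComponent j P = 0) (hm : homogeneousComponent m P ≠ 0) :
    minMonomialDeg P = m := by
  rw [minMonomialDeg_eq_sInf]
  exact le_antisymm (Nat.sInf_le hm) (le_csInf ⟨m, hm⟩ fun j hj => not_lt.1 fun h => hj (hlt j h))

theorem tangentCone_eq_of_homogeneousComponent {P : MvPolynomial (Fin 2) K} {m : ℕ}
    (hlt : ∀ j < m, homogeneousComponent j P = 0) (hm : homogeneousComponent m P ≠ 0) :
    tangentCone P = homogeneousComponent m P := by
  rw [tangentCone, minMonomialDeg_eq_of_homogeneousComponent hlt hm]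

theorem C_mul_X_add_C_mul_X_ne_zero {a : K} (b : K) (ha : a ≠ 0) :
    C a * (X 0 : MvPolynomial (Fin 2) K) + C b * X 1 ≠ 0 := by
  intro h
  apply ha
  simpa [coeff_X, Finsupp.single_eq_single_iff] using
    congrArg (coeff (Finsupp.single (0 : Fin 2) 1)) h

end TangentCone

section ApnCurve

variable {K : Type*} [Field K]

def apnCurveIndex (d : ℕ) : Finset ((_ : ℕ) × ℕ) :=
  (Finset.Icc 3 d).sigma fun i => Finset.Icc 1 (i - 1)

def apnCurveTerm (f : Polynomial K) (d : ℕ) (x : (_ : ℕ) × ℕ) : MvPolynomial (Fin 2) K :=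
  C (f.coeff x.1) * X 1 ^ (d - x.1) * (C ((((x.1 - 1).choose x.2 + 1 : ℕ) : K)) * X 0 ^ (x.2 - 1))

theorem sum_eq_sum_apnCurveTerm (f : Polynomial K) (d : ℕ) :
    ∑ i ∈ Finset.Icc 3 d, C (f.coeff i) * (X 1 : MvPolynomial (Fin 2) K) ^ (d - i) *
        ∑ k ∈ Finset.Icc 1 (i - 1), C ((((i - 1).choose k + 1 : ℕ) : K)) * (X 0) ^ (k - 1) =
      ∑ x ∈ apnCurveIndex d, apnCurveTerm f d x := by
  simp only [apnCurveIndex, Finset.sum_sigma, Finset.mul_sum, apnCurveTerm]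

theorem apnCurveTerm_isHomogeneous (f : Polynomial K) (d : ℕ) (x : (_ : ℕ) × ℕ) :
    (apnCurveTerm f d x).IsHomogeneous (d - x.1 + (x.2 - 1)) :=
  (isHomogeneous_C_mul_X_pow _ _ _).mul (isHomogeneous_C_mul_X_pow _ _ _)

theorem homogeneousComponent_sum_apnCurveTerm (f : Polynomial K) (d m : ℕ) :
    homogeneousComponent m (∑ x ∈ apnCurveIndex d, apnCurveTerm f d x) =
      ∑ x ∈ apnCurveIndex d with d - x.1 + (x.2 - 1) = m, apnCurveTerm f d x :=
  homogeneousComponent_sum_of_isHomogeneous _ _ _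
    (fun x _ => apnCurveTerm_isHomogeneous f d x) m

theorem apnCurveIndex_filter_deg_zero {d : ℕ} (hd : 3 ≤ d) :
    {x ∈ apnCurveIndex d | d - x.1 + (x.2 - 1) = 0} = {⟨d, 1⟩} := by
  ext ⟨i, k⟩
  simp only [apnCurveIndex, Finset.mem_filter, Finset.mem_sigma, Finset.mem_Icc,
    Finset.mem_singleton, Sigma.mk.injEq, heq_eq_eq]
  omega

theorem apnCurveIndex_filter_deg_one {d : ℕ} (hd : 4 ≤ d) :
    {x ∈ apnCurveIndex d | d - x.1 + (x.2 - 1) = 1} = {⟨d - 1, 1⟩, ⟨d, 2⟩} := by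
  ext ⟨i, k⟩
  simp only [apnCurveIndex, Finset.mem_filter, Finset.mem_sigma, Finset.mem_Icc,
    Finset.mem_insert, Finset.mem_singleton, Sigma.mk.injEq, heq_eq_eq]
  omega

variable (f : Polynomial K) {d : ℕ} (h2 : (2 : K) = 0)
include h2

theorem apnCurveTerm_self_one (hd : Even d) (hd0 : d ≠ 0) : apnCurveTerm f d ⟨d, 1⟩ = 0 := by
  have hcoeff : (d - 1).choose 1 + 1 = d := by rw [Nat.choose_one_right]; omega
  simp only [apnCurveTerm, hcoeff, natCast_eq_zero_of_even_of_two_eq_zero hd h2, C_0, zero_mul,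
    mul_zero]

theorem apnCurveTerm_pred_one (hd : Even d) (hd0 : d ≠ 0) :
    apnCurveTerm f d ⟨d - 1, 1⟩ = C (f.coeff (d - 1)) * X 1 := by
  have hodd : Odd (d - 1) := Nat.Even.sub_odd (Nat.one_le_iff_ne_zero.2 hd0) hd odd_one
  have hcoeff : (d - 1 - 1).choose 1 + 1 = d - 1 := by
    have := hd.two_dvd
    rw [Nat.choose_one_right]; omega
  have hexp : d - (d - 1) = 1 := by omega
  simp only [apnCurveTerm, hcoeff, hexp, natCast_eq_one_of_odd_of_two_eq_zero hodd h2, C_1,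
    pow_one, pow_zero, tsub_self, mul_one]

theorem apnCurveTerm_self_two (hd : d % 4 = 2) :
    apnCurveTerm f d ⟨d, 2⟩ = C (f.coeff d) * X 0 := by
  simp only [apnCurveTerm, natCast_eq_one_of_odd_of_two_eq_zero
    (Nat.odd_choose_two_pred_add_one hd) h2, C_1, tsub_self, pow_zero, mul_one, one_mul,
    Nat.add_one_sub_one, pow_one]

end ApnCurve

theorem apn_curve_tangent_cone_general
    {K : Type*} [Field K] [Fintype K] (n : ℕ)
    (hcard : Fintype.card K = 2 ^ n)
    (f : Polynomial K) (d : ℕ) (hd6 : 6 ≤ d)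
    (hAd : f.coeff d ≠ 0) (hdmod : d % 4 = 2)
    (F : MvPolynomial (Fin 2) K)
    (hF : F = ∑ i ∈ Finset.Icc 3 d, C (f.coeff i) * (X 1 : MvPolynomial (Fin 2) K) ^ (d - i) *
        ∑ k ∈ Finset.Icc 1 (i - 1), C ((((i - 1).choose k + 1 : ℕ) : K)) * (X 0) ^ (k - 1)) :
    eval ![(0 : K), 0] F = 0 ∧
    homogeneousComponent 0 F = 0 ∧
    homogeneousComponent 1 F =
      C (f.coeff d) * (X 0 : MvPolynomial (Fin 2) K) + C (f.coeff (d - 1)) * X 1 ∧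
    C (f.coeff d) * (X 0 : MvPolynomial (Fin 2) K) + C (f.coeff (d - 1)) * X 1 ≠ 0 ∧
    tangentCone F =
      C (f.coeff d) * (X 0 : MvPolynomial (Fin 2) K) + C (f.coeff (d - 1)) * X 1 := by
  have h2 : (2 : K) = 0 := two_eq_zero_of_card_eq_two_pow hcard
  have hd : Even d := Nat.even_iff.2 (by omega)
  have hd0 : d ≠ 0 := by omega
  rw [sum_eq_sum_apnCurveTerm] at hF
  subst hF
  have h0 : homogeneousComponent 0 (∑ x ∈ apnCurveIndex d, apnCurveTerm f d x) = 0 := by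
    rw [homogeneousComponent_sum_apnCurveTerm, apnCurveIndex_filter_deg_zero (by omega),
      Finset.sum_singleton, apnCurveTerm_self_one f h2 hd hd0]
  have h1 : homogeneousComponent 1 (∑ x ∈ apnCurveIndex d, apnCurveTerm f d x) =
      C (f.coeff d) * X 0 + C (f.coeff (d - 1)) * X 1 := by
    rw [homogeneousComponent_sum_apnCurveTerm, apnCurveIndex_filter_deg_one (by omega),
      Finset.sum_pair (by simp), apnCurveTerm_pred_one f h2 hd hd0,
      apnCurveTerm_self_two f h2 hdmod, add_comm]
  have hne := C_mul_X_add_C_mul_X_ne_zero (f.coeff (d - 1)) hAd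
  have hzero : ![(0 : K), 0] = 0 := by ext i; fin_cases i <;> rfl
  refine ⟨hzero ▸ eval_zero_eq_zero_of_homogeneousComponent_zero h0, h0, h1, hne, ?_⟩
  rw [tangentCone_eq_of_homogeneousComponent (fun j hj => Nat.lt_one_iff.1 hj ▸ h0) (h1 ▸ hne), h1]

theorem apn_curve_tangent_cone
    {K : Type*} [Field K] [Fintype K] (n : ℕ) (hn : 1 ≤ n)
    (hcard : Fintype.card K = 2 ^ n)
    (f : Polynomial K) (d : ℕ) (hd : f.natDegree = d) (hd6 : 6 ≤ d)
    (hAd : f.coeff d ≠ 0) (hdmod : d % 4 = 2)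
    (F : MvPolynomial (Fin 2) K)
    (hF : F = ∑ i ∈ Finset.Icc 3 d, C (f.coeff i) * (X 1 : MvPolynomial (Fin 2) K) ^ (d - i) *
        ∑ k ∈ Finset.Icc 1 (i - 1), C ((((i - 1).choose k + 1 : ℕ) : K)) * (X 0) ^ (k - 1)) :
    eval ![(0 : K), 0] F = 0 ∧
    homogeneousComponent 0 F = 0 ∧
    homogeneousComponent 1 F =
      C (f.coeff d) * (X 0 : MvPolynomial (Fin 2) K) + C (f.coeff (d - 1)) * X 1 ∧
    C (f.coeff d) * (X 0 : MvPolynomial (Fin 2) K) + C (f.coeff (d - 1)) * X 1 ≠ 0 ∧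
    tangentCone F =
      C (f.coeff d) * (X 0 : MvPolynomial (Fin 2) K) + C (f.coeff (d - 1)) * X 1 :=
  apn_curve_tangent_cone_general n hcard f d hd6 hAd hdmod F hF
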